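/- For every controlled Markov process and every discount factor γ ∈ (0,1), the set of γ-discounted state distributions induced by non-Markovian policies equals the set induced by Markovian policies: {d_γ^π : π non-Markovian} = {d_γ^π : π Markovian}, where d_γ^π(s) = (1−γ) Σ_{t=0}^∞ γ^t d_t^π(s). -/

import Mathlib

open scoped BigOperators

/-- A controlled Markov process over finite state space `S` and action space `A`:
a transition kernel `P` and an initial distribution `μ`. -/
structure CMP (S A : Type) [Fintype S] [Fintype A] where
  P : S → A → S → ℝ
  P_nonneg : ∀ s a s', 0 ≤ P s a s'
  P_sum_one : ∀ s a, ∑ s', P s a s' = 1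
  μ : S → ℝ
  μ_nonneg : ∀ s, 0 ≤ μ s
  μ_sum_one : ∑ s, μ s = 1

/-- A history of `t` steps: states `s_0, …, s_t` and actions `a_0, …, a_{t-1}`. -/
abbrev Hist (S A : Type) (t : ℕ) : Type := (Fin (t + 1) → S) × (Fin t → A)

/-- A continuation of `k` further steps: actions `a_0, …, a_{k-1}` together with the
states those actions lead to. -/
abbrev Contin (S A : Type) (k : ℕ) : Type := (Fin k → A) × (Fin k → S)

/-- A general (possibly non-Markovian, possibly randomized) policy: for every time `t`
and history of length `t`, a probability distribution over actions. -/
structure Policy (S A : Type) [Fintype A] where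
  p : ∀ t : ℕ, Hist S A t → A → ℝ
  nonneg : ∀ t h a, 0 ≤ p t h a
  sum_one : ∀ t h, ∑ a, p t h a = 1

/-- A Markovian (randomized, time-dependent) policy: for every time `t` and current
state `s`, a probability distribution over actions. -/
structure MPolicy (S A : Type) [Fintype A] where
  p : ℕ → S → A → ℝ
  nonneg : ∀ t s a, 0 ≤ p t s a
  sum_one : ∀ t s, ∑ a, p t s a = 1

/-- The last (current) state of a history. -/
def lastState {S A : Type} {t : ℕ} (h : Hist S A t) : S := h.1 (Fin.last t)

/-- A Markovian policy viewed as a general policy. -/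
def MPolicy.toPolicy {S A : Type} [Fintype A] (m : MPolicy S A) : Policy S A where
  p := fun t h a => m.p t (lastState h) a
  nonneg := fun t h a => m.nonneg t _ a
  sum_one := fun t h => m.sum_one t _

/-- The general policy induced by a deterministic non-Markovian policy
(a function from histories to actions). -/
def detPolicy {S A : Type} [Fintype A] [DecidableEq A] (f : ∀ t : ℕ, Hist S A t → A) :
    Policy S A where
  p := fun t h a => if a = f t h then 1 else 0
  nonneg := by intro t h a; split <;> norm_num
  sum_one := by intro t h; simp

/-- The length-`i` prefix of a history. -/
def histTake {S A : Type} {t : ℕ} (h : Hist S A t) (i : ℕ) (hi : i ≤ t) : Hist S A i :=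
  (fun j => h.1 ⟨(j : ℕ), by have := j.isLt; omega⟩,
   fun j => h.2 ⟨(j : ℕ), by have := j.isLt; omega⟩)

/-- The probability that policy `π` generates the history `h` when interacting with
the CMP `M` (initial state from `μ`, actions from `π`, transitions from `P`). -/
noncomputable def histProb {S A : Type} [Fintype S] [Fintype A]
    (M : CMP S A) (π : Policy S A) {t : ℕ} (h : Hist S A t) : ℝ :=
  M.μ (h.1 0) * ∏ i : Fin t,
    (π.p i (histTake h i (Nat.le_of_lt i.isLt)) (h.2 i) *
      M.P (h.1 i.castSucc) (h.2 i) (h.1 i.succ))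

/-- The `t`-step state distribution `d_t^π(s) = Pr(s_t = s)`. -/
noncomputable def stateDist {S A : Type} [Fintype S] [Fintype A] [DecidableEq S]
    (M : CMP S A) (π : Policy S A) (t : ℕ) (s : S) : ℝ :=
  ∑ h : Hist S A t, if lastState h = s then histProb M π h else 0

/-- Shannon entropy of a distribution on a finite set (`0 log 0 = 0` since `Real.log 0 = 0`). -/
noncomputable def entropy {S : Type} [Fintype S] (d : S → ℝ) : ℝ :=
  -∑ s, d s * Real.log (d s)

/-- The state visitation frequency of a trajectory with `n+1` states. -/
noncomputable def visitFreq {S A : Type} [Fintype S] [DecidableEq S] {n : ℕ}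
    (h : Hist S A n) (s : S) : ℝ :=
  (∑ i : Fin (n + 1), if h.1 i = s then (1 : ℝ) else 0) / ((n : ℝ) + 1)

/-- The marginal state distribution `d_T^π(s) = (1/T) ∑_{t<T} d_t^π(s)`. -/
noncomputable def marginalDist {S A : Type} [Fintype S] [Fintype A] [DecidableEq S]
    (M : CMP S A) (π : Policy S A) (T : ℕ) (s : S) : ℝ :=
  (1 / (T : ℝ)) * ∑ t ∈ Finset.range T, stateDist M π t s

/-- The `γ`-discounted state distribution `d_γ^π(s) = (1-γ) ∑_t γ^t d_t^π(s)`. -/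
noncomputable def discountedDist {S A : Type} [Fintype S] [Fintype A] [DecidableEq S]
    (M : CMP S A) (π : Policy S A) (γ : ℝ) (s : S) : ℝ :=
  (1 - γ) * ∑' t : ℕ, γ ^ t * stateDist M π t s

/-- Concatenation of a length-`t` history with a `k`-step continuation. -/
def histAppend {S A : Type} {t k : ℕ} (h : Hist S A t) (c : Contin S A k) : Hist S A (t + k) :=
  (fun j => if hj : (j : ℕ) ≤ t then h.1 ⟨(j : ℕ), by omega⟩
            else c.2 ⟨(j : ℕ) - t - 1, by have := j.isLt; omega⟩,
   fun j => if hj : (j : ℕ) < t then h.2 ⟨(j : ℕ), hj⟩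
            else c.1 ⟨(j : ℕ) - t, by have := j.isLt; omega⟩)

/-- The probability that, after the prefix history `h`, running `π` (conditioned on the
full history) produces the `k`-step continuation `c`. -/
noncomputable def contProb {S A : Type} [Fintype S] [Fintype A]
    (M : CMP S A) (π : Policy S A) {t k : ℕ} (h : Hist S A t) (c : Contin S A k) : ℝ :=
  ∏ i : Fin k,
    (π.p (t + (i : ℕ))
        (histTake (histAppend h c) (t + (i : ℕ)) (by have := i.isLt; omega))
        ((histAppend h c).2 ⟨t + (i : ℕ), by have := i.isLt; omega⟩) *
      M.P ((histAppend h c).1 ⟨t + (i : ℕ), by have := i.isLt; omega⟩)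
        ((histAppend h c).2 ⟨t + (i : ℕ), by have := i.isLt; omega⟩)
        ((histAppend h c).1 ⟨t + (i : ℕ) + 1, by have := i.isLt; omega⟩))

/-- The expected entropy of the state visitation frequency of the completed trajectory,
when running `π` for `k` further steps after the prefix history `h`. -/
noncomputable def expEntFrom {S A : Type} [Fintype S] [Fintype A] [DecidableEq S]
    (M : CMP S A) (π : Policy S A) {t : ℕ} (k : ℕ) (h : Hist S A t) : ℝ :=
  ∑ c : Contin S A k, contProb M π h c * entropy (visitFreq (histAppend h c))

/-- A history has positive probability (under some policy) iff its initial state and all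
its transitions have positive probability. -/
def Reachable {S A : Type} [Fintype S] [Fintype A] (M : CMP S A) {t : ℕ}
    (h : Hist S A t) : Prop :=
  0 < M.μ (h.1 0) ∧ ∀ i : Fin t, 0 < M.P (h.1 i.castSucc) (h.2 i) (h.1 i.succ)

/-!
The state distribution at time `t + 1` depends on the policy only through the joint
distribution of `(s_t, a_t)`. The Markov policy that, at time `t` in state `s`, plays `a` with
the conditional probability `Pr(a_t = a | s_t = s)` under `π` (and uniformly where
`Pr(s_t = s) = 0`) therefore has the same joint distributions, hence by induction on `t`
the same `d_t`, hence the same `d_γ` for every `γ`.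
-/

section Histories

variable {S A : Type}

def histSnoc {t : ℕ} (h : Hist S A t) (a : A) (s' : S) : Hist S A (t + 1) :=
  (Fin.snoc h.1 s', Fin.snoc h.2 a)

@[simp]
theorem lastState_histSnoc {t : ℕ} (h : Hist S A t) (a : A) (s' : S) :
    lastState (histSnoc h a s') = s' :=
  Fin.snoc_last (α := fun _ => S) _ _

theorem histTake_histSnoc {t i : ℕ} (h : Hist S A t) (a : A) (s' : S) (hi : i ≤ t)
    (hi' : i ≤ t + 1) : histTake (histSnoc h a s') i hi' = histTake h i hi := by
  ext j
  · exact Fin.snoc_castSucc (α := fun _ => S)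
      (i := (⟨j, by have := j.is_lt; omega⟩ : Fin (t + 1))) _ _
  · exact Fin.snoc_castSucc (α := fun _ => A) (i := (⟨j, by have := j.is_lt; omega⟩ : Fin t)) _ _

theorem histTake_self {t : ℕ} (h : Hist S A t) : histTake h t le_rfl = h :=
  rfl

variable (S A) in
def histSnocEquiv (t : ℕ) : Hist S A t × A × S ≃ Hist S A (t + 1) where
  toFun x := histSnoc x.1 x.2.1 x.2.2
  invFun h := ((Fin.init h.1, Fin.init h.2), h.2 (Fin.last t), h.1 (Fin.last (t + 1)))
  left_inv x := by simp [histSnoc]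
  right_inv h := Prod.ext (Fin.snoc_init_self h.1) (Fin.snoc_init_self h.2)

theorem Policy.nonempty_action [Fintype A] [Nonempty S] (π : Policy S A) : Nonempty A := by
  by_contra hA
  rw [not_nonempty_iff] at hA
  simpa using π.sum_one 0 (fun _ => Classical.arbitrary S, Fin.elim0)

end Histories

section Markovization

variable {S A : Type} [Fintype S] [Fintype A]

theorem CMP.nonempty_state (M : CMP S A) : Nonempty S := by
  by_contra hS
  rw [not_nonempty_iff] at hS
  simpa using M.μ_sum_one

theorem histProb_nonneg (M : CMP S A) (π : Policy S A) {t : ℕ} (h : Hist S A t) :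
    0 ≤ histProb M π h :=
  mul_nonneg (M.μ_nonneg _) (Finset.prod_nonneg fun _ _ =>
    mul_nonneg (π.nonneg _ _ _) (M.P_nonneg _ _ _))

theorem histProb_histSnoc (M : CMP S A) (π : Policy S A) {t : ℕ} (h : Hist S A t)
    (a : A) (s' : S) :
    histProb M π (histSnoc h a s')
      = histProb M π h * (π.p t h a * M.P (lastState h) a s') := by
  rw [histProb, histProb, Fin.prod_univ_castSucc, mul_assoc]
  congr 2
  · refine Finset.prod_congr rfl fun i _ => ?_
    simp only [Fin.val_castSucc, histTake_histSnoc h a s' i.is_lt.le]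
    simp only [histSnoc, Fin.succ_castSucc, Fin.snoc_castSucc]
  · simp only [Fin.val_last, histTake_histSnoc h a s' le_rfl, histTake_self]
    simp only [histSnoc, Fin.succ_last, Fin.snoc_last, Fin.snoc_castSucc]
    rfl

variable [DecidableEq S]

noncomputable def stateActionDist (M : CMP S A) (π : Policy S A) (t : ℕ) (s : S) (a : A) : ℝ :=
  ∑ h : Hist S A t, if lastState h = s then histProb M π h * π.p t h a else 0

theorem stateActionDist_nonneg (M : CMP S A) (π : Policy S A) (t : ℕ) (s : S) (a : A) :
    0 ≤ stateActionDist M π t s a :=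
  Finset.sum_nonneg fun h _ => by
    split_ifs
    exacts [mul_nonneg (histProb_nonneg M π h) (π.nonneg t h a), le_rfl]

theorem sum_stateActionDist (M : CMP S A) (π : Policy S A) (t : ℕ) (s : S) :
    ∑ a, stateActionDist M π t s a = stateDist M π t s := by
  simp only [stateActionDist]
  rw [Finset.sum_comm]
  refine Finset.sum_congr rfl fun h _ => ?_
  split_ifs
  · rw [← Finset.mul_sum, π.sum_one, mul_one]
  · exact Finset.sum_const_zero

theorem stateDist_nonneg (M : CMP S A) (π : Policy S A) (t : ℕ) (s : S) :
    0 ≤ stateDist M π t s :=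
  sum_stateActionDist M π t s ▸ Finset.sum_nonneg fun a _ => stateActionDist_nonneg M π t s a

theorem stateActionDist_eq_zero_of_stateDist_eq_zero {M : CMP S A} {π : Policy S A} {t : ℕ}
    {s : S} (hs : stateDist M π t s = 0) (a : A) : stateActionDist M π t s a = 0 :=
  (Finset.sum_eq_zero_iff_of_nonneg fun a _ => stateActionDist_nonneg M π t s a).mp
    (sum_stateActionDist M π t s ▸ hs) a (Finset.mem_univ a)

theorem stateDist_zero (M : CMP S A) (π : Policy S A) (s : S) :
    stateDist M π 0 s = M.μ s := by
  rw [stateDist, Fintype.sum_prod_type, ← (Equiv.funUnique (Fin 1) S).symm.sum_comp]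
  simp [lastState, histProb]

theorem stateDist_succ (M : CMP S A) (π : Policy S A) (t : ℕ) (s' : S) :
    stateDist M π (t + 1) s' = ∑ s, ∑ a, stateActionDist M π t s a * M.P s a s' := by
  have by_history : stateDist M π (t + 1) s'
      = ∑ h : Hist S A t, ∑ a, histProb M π h * π.p t h a * M.P (lastState h) a s' := by
    rw [stateDist, ← (histSnocEquiv S A t).sum_comp, Fintype.sum_prod_type]
    refine Finset.sum_congr rfl fun h _ => ?_
    rw [Fintype.sum_prod_type]
    refine Finset.sum_congr rfl fun a _ => ?_
    simp [histSnocEquiv, histProb_histSnoc, mul_assoc]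
  simp only [by_history, stateActionDist, Finset.sum_mul, ite_mul, zero_mul]
  rw [Finset.sum_comm_cycle]
  simp

theorem stateActionDist_toPolicy (M : CMP S A) (m : MPolicy S A) (t : ℕ) (s : S) (a : A) :
    stateActionDist M m.toPolicy t s a = stateDist M m.toPolicy t s * m.p t s a := by
  rw [stateDist, Finset.sum_mul]
  refine Finset.sum_congr rfl fun h _ => ?_
  split_ifs with hs
  · rw [← hs]
    rfl
  · rw [zero_mul]

noncomputable def markovize (M : CMP S A) (π : Policy S A) : MPolicy S A :=
  haveI := M.nonempty_state
  haveI := π.nonempty_action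
  { p := fun t s a => if stateDist M π t s = 0 then (Fintype.card A : ℝ)⁻¹
      else stateActionDist M π t s a / stateDist M π t s
    nonneg := fun t s a => by
      split_ifs
      exacts [by positivity,
        div_nonneg (stateActionDist_nonneg M π t s a) (stateDist_nonneg M π t s)]
    sum_one := fun t s => by
      split_ifs with hs
      · simp
      · rw [← Finset.sum_div, sum_stateActionDist, div_self hs] }

theorem stateDist_mul_markovize (M : CMP S A) (π : Policy S A) (t : ℕ) (s : S) (a : A) :
    stateDist M π t s * (markovize M π).p t s a = stateActionDist M π t s a := by
  simp only [markovize]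
  split_ifs with hs
  · rw [hs, zero_mul, stateActionDist_eq_zero_of_stateDist_eq_zero hs]
  · exact mul_div_cancel₀ _ hs

theorem stateDist_markovize (M : CMP S A) (π : Policy S A) (t : ℕ) (s : S) :
    stateDist M (markovize M π).toPolicy t s = stateDist M π t s := by
  induction t generalizing s with
  | zero => rw [stateDist_zero, stateDist_zero]
  | succ t ih =>
    simp only [stateDist_succ, stateActionDist_toPolicy, ih, stateDist_mul_markovize]

theorem discountedDist_markovize (M : CMP S A) (π : Policy S A) (γ : ℝ) (s : S) :
    discountedDist M (markovize M π).toPolicy γ s = discountedDist M π γ s := by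
  simp only [discountedDist, stateDist_markovize]

end Markovization

theorem discounted_state_distributions_eq_general
    {S A : Type} [Fintype S] [Fintype A] [DecidableEq S]
    (M : CMP S A) (γ : ℝ) :
    {f : S → ℝ | ∃ π : Policy S A, f = fun s => discountedDist M π γ s}
      = {f : S → ℝ | ∃ π' : MPolicy S A, f = fun s => discountedDist M π'.toPolicy γ s} := by
  ext f
  constructor
  · rintro ⟨π, rfl⟩
    exact ⟨markovize M π, funext fun s => (discountedDist_markovize M π γ s).symm⟩
  · rintro ⟨m, rfl⟩
    exact ⟨m.toPolicy, rfl⟩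

/-- for every discount factor `γ ∈ (0,1)`, the set of `γ`-discounted state
distributions induced by non-Markovian policies equals the set induced by Markovian
policies. -/
theorem discounted_state_distributions_eq
    {S A : Type} [Fintype S] [Fintype A] [Nonempty S] [Nonempty A] [DecidableEq S]
    (M : CMP S A) (γ : ℝ) (hγ : γ ∈ Set.Ioo (0 : ℝ) 1) :
    {f : S → ℝ | ∃ π : Policy S A, f = fun s => discountedDist M π γ s}
      = {f : S → ℝ | ∃ π' : MPolicy S A, f = fun s => discountedDist M π'.toPolicy γ s} :=
  discounted_state_distributions_eq_general M γ
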